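/- Let Ω^f = Ω̃ × (0,H) with Ω̃ bounded Lipschitz. There exists C > 0 (independent of ε) such that for all u ∈ H¹(Ω^f), the trace on the graph surface Σ_ε = {(x̃, εγ(x̃/ε)) : x̃ ∈ Ω̃}, for γ L-Lipschitz periodic with values in [0,1] and ε ∈ (0, H), satisfies ‖u‖_{L²(Σ_ε)} ≤ C ‖u‖_{H¹(Ω^f)}. -/

import Mathlib

/-!
Along each vertical segment, the fundamental theorem of calculus and `2ab ≤ a² + b²` bound
`u(x̃, b)²`, for any height `b ∈ [0, H]`, by `(1 + H) / H` times the `H¹` energy of `u(x̃, ·)` on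
`(0, H)`; the height `εγ(x̃/ε)` lies in `[0, H]`. The graph map `x̃ ↦ (x̃, εγ(x̃/ε))` is
`max 1 L`-Lipschitz whatever `ε` is, so the `d`-dimensional Hausdorff measure on `Σ_ε` is at most
`(max 1 L)^d` times the image of Lebesgue measure on `Ω̃`. Integrating the vertical bound over `Ω̃`
(Tonelli) gives the estimate with `C² = (max 1 L)^d (1 + H) / H`.
-/

open MeasureTheory Set
open scoped ENNReal NNReal

theorem sq_le_sq_add_setIntegral_Ioc {g g' : ℝ → ℝ} (hg : ∀ s, HasDerivAt g (g' s) s)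
    (hg' : Continuous g') {H b t : ℝ} (hb : b ∈ Icc 0 H) (ht : t ∈ Icc 0 H) :
    g b ^ 2 ≤ g t ^ 2 + ∫ s in Ioc 0 H, (g s ^ 2 + g' s ^ 2) := by
  have hgc : Continuous g := continuous_iff_continuousAt.2 fun s => (hg s).continuousAt
  have hderiv : ∀ s, HasDerivAt (fun s => g s ^ 2) (2 * g s * g' s) s := fun s => by
    simpa using (hg s).fun_pow 2
  have hcont : Continuous fun s => 2 * g s * g' s := by fun_prop
  have hftc : ∫ s in t..b, 2 * g s * g' s = g b ^ 2 - g t ^ 2 :=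
    intervalIntegral.integral_eq_sub_of_hasDerivAt (fun s _ => hderiv s)
      (hcont.intervalIntegrable t b)
  have hpt : ∀ s, ‖2 * g s * g' s‖ ≤ g s ^ 2 + g' s ^ 2 := fun s => by
    rw [Real.norm_eq_abs, abs_le]
    constructor <;> nlinarith [sq_nonneg (g s + g' s), sq_nonneg (g s - g' s)]
  have hsub : uIoc t b ⊆ Ioc 0 H := fun s hs =>
    ⟨(le_min ht.1 hb.1).trans_lt hs.1, hs.2.trans (max_le ht.2 hb.2)⟩
  have hbound : ‖∫ s in t..b, 2 * g s * g' s‖ ≤ ∫ s in Ioc 0 H, (g s ^ 2 + g' s ^ 2) :=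
    calc ‖∫ s in t..b, 2 * g s * g' s‖
        ≤ ∫ s in uIoc t b, ‖2 * g s * g' s‖ := intervalIntegral.norm_integral_le_integral_norm_uIoc
      _ ≤ ∫ s in uIoc t b, (g s ^ 2 + g' s ^ 2) :=
          setIntegral_mono_on hcont.norm.integrableOn_uIoc
            (by fun_prop : Continuous _).integrableOn_uIoc measurableSet_uIoc fun s _ => hpt s
      _ ≤ ∫ s in Ioc 0 H, (g s ^ 2 + g' s ^ 2) :=
          setIntegral_mono_set (by fun_prop : Continuous _).integrableOn_Ioc
            (.of_forall fun s => by positivity) (.of_forall hsub)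
  rw [hftc, Real.norm_eq_abs] at hbound
  linarith [le_abs_self (g b ^ 2 - g t ^ 2)]

theorem sq_le_mul_setIntegral_Ioc {g g' : ℝ → ℝ} (hg : ∀ s, HasDerivAt g (g' s) s)
    (hg' : Continuous g') {H b : ℝ} (hH : 0 < H) (hb : b ∈ Icc 0 H) :
    g b ^ 2 ≤ (1 + H) / H * ∫ s in Ioc 0 H, (g s ^ 2 + g' s ^ 2) := by
  have hgc : Continuous g := continuous_iff_continuousAt.2 fun s => (hg s).continuousAt
  set F := ∫ s in Ioc 0 H, (g s ^ 2 + g' s ^ 2)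
  have hvol : volume.real (Ioc 0 H) = H := by simp [hH.le]
  have hg2 : IntegrableOn (fun s => g s ^ 2) (Ioc 0 H) :=
    (by fun_prop : Continuous _).integrableOn_Ioc
  have hg2F : ∫ s in Ioc 0 H, g s ^ 2 ≤ F :=
    setIntegral_mono_on hg2 (by fun_prop : Continuous _).integrableOn_Ioc measurableSet_Ioc
      fun s _ => le_add_of_nonneg_right (sq_nonneg _)
  have havg : H * g b ^ 2 ≤ (∫ s in Ioc 0 H, g s ^ 2) + H * F := by
    have hmono : ∫ _ in Ioc 0 H, g b ^ 2 ≤ ∫ t in Ioc 0 H, (g t ^ 2 + F) :=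
      setIntegral_mono_on (integrableOn_const (by simp)) (hg2.add (integrableOn_const (by simp)))
        measurableSet_Ioc fun t ht =>
          sq_le_sq_add_setIntegral_Ioc hg hg' hb (Ioc_subset_Icc_self ht)
    rwa [integral_add hg2 (integrableOn_const (by simp)), setIntegral_const, setIntegral_const,
      hvol, smul_eq_mul, smul_eq_mul] at hmono
  rw [div_mul_eq_mul_div, le_div_iff₀ hH]
  linarith

theorem sq_le_mul_setIntegral_vertical {E : Type*} [NormedAddCommGroup E] [NormedSpace ℝ E]
    {u : E × ℝ → ℝ} (hu : ContDiff ℝ 1 u) (x : E) {H b : ℝ} (hH : 0 < H) (hb : b ∈ Icc 0 H) :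
    u (x, b) ^ 2 ≤ (1 + H) / H * ∫ s in Ioo 0 H, (u (x, s) ^ 2 + ‖fderiv ℝ u (x, s)‖ ^ 2) := by
  have huc : Continuous u := hu.continuous
  have hDu : Continuous (fderiv ℝ u) := hu.continuous_fderiv one_ne_zero
  have hderiv : ∀ s, HasDerivAt (fun s => u (x, s)) (fderiv ℝ u (x, s) (0, 1)) s := fun s =>
    (hu.differentiable one_ne_zero _).hasFDerivAt.comp_hasDerivAt s
      ((hasDerivAt_const s x).prodMk (hasDerivAt_id s))
  have hpartial : ∀ s, (fderiv ℝ u (x, s) (0, 1)) ^ 2 ≤ ‖fderiv ℝ u (x, s)‖ ^ 2 := fun s => by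
    have := (fderiv ℝ u (x, s)).le_opNorm (0, 1)
    rw [← sq_abs, ← Real.norm_eq_abs]
    gcongr
    simpa [Prod.norm_def] using this
  refine (sq_le_mul_setIntegral_Ioc hderiv (by fun_prop) hH hb).trans ?_
  rw [← integral_Ioc_eq_integral_Ioo]
  refine mul_le_mul_of_nonneg_left ?_ (by positivity)
  refine setIntegral_mono_on ?_ ?_ measurableSet_Ioc fun s _ => by linarith [hpartial s]
  all_goals exact Continuous.integrableOn_Ioc (by fun_prop)

theorem LipschitzWith.setLIntegral_image_le {X Y : Type*} [EMetricSpace X] [EMetricSpace Y]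
    [MeasurableSpace X] [BorelSpace X] [MeasurableSpace Y] [BorelSpace Y] {K : ℝ≥0} {f : X → Y}
    (hf : LipschitzWith K f) {d : ℝ} (hd : 0 ≤ d) (s : Set X) {g : Y → ℝ≥0∞}
    (hg : Measurable g) :
    ∫⁻ y in f '' s, g y ∂μH[d] ≤ (K : ℝ≥0∞) ^ d * ∫⁻ x in s, g (f x) ∂μH[d] := by
  have hfm : Measurable f := hf.continuous.measurable
  have hle : (μH[d].restrict (f '' s)) ≤ (K : ℝ≥0∞) ^ d • (μH[d].restrict s).map f := by
    refine Measure.le_iff.2 fun B hB => ?_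
    rw [Measure.restrict_apply hB, Measure.smul_apply, Measure.map_apply hfm hB,
      Measure.restrict_apply (hfm hB), ← image_preimage_inter]
    exact hf.hausdorffMeasure_image_le hd _
  calc ∫⁻ y in f '' s, g y ∂μH[d]
      ≤ ∫⁻ y, g y ∂((K : ℝ≥0∞) ^ d • (μH[d].restrict s).map f) := lintegral_mono' hle le_rfl
    _ = (K : ℝ≥0∞) ^ d * ∫⁻ x in s, g (f x) ∂μH[d] := by
      rw [lintegral_smul_measure, lintegral_map hg hfm, smul_eq_mul]

theorem LipschitzWith.rescale {E : Type*} [NormedAddCommGroup E] [NormedSpace ℝ E] {K : ℝ≥0}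
    {γ : E → ℝ} (hγ : LipschitzWith K γ) {ε : ℝ} (hε : ε ≠ 0) :
    LipschitzWith K fun x => ε * γ (ε⁻¹ • x) := by
  have hK : ‖ε‖₊ * (K * ‖ε⁻¹‖₊) = K := by
    rw [nnnorm_inv, mul_comm (K : ℝ≥0), ← mul_assoc, mul_inv_cancel₀ (nnnorm_ne_zero_iff.2 hε),
      one_mul]
  have := (lipschitzWith_smul ε).comp (hγ.comp (lipschitzWith_smul ε⁻¹))
  rw [hK] at this
  exact this

theorem lintegral_sq_graph_le {ι : Type*} [Fintype ι] {H : ℝ} (hH : 0 < H) {K : ℝ≥0}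
    {h : (ι → ℝ) → ℝ} (hh : LipschitzWith K h) (hh_mem : ∀ x, h x ∈ Icc 0 H) (s : Set (ι → ℝ))
    {u : (ι → ℝ) × ℝ → ℝ} (hu : ContDiff ℝ 1 u) :
    ∫⁻ p in (fun x => (x, h x)) '' s, ENNReal.ofReal (u p ^ 2) ∂μH[Fintype.card ι] ≤
      ENNReal.ofReal (((max 1 K : ℝ≥0) : ℝ) ^ Fintype.card ι * ((1 + H) / H)) *
        ∫⁻ p in s ×ˢ Ioo 0 H, ENNReal.ofReal (u p ^ 2 + ‖fderiv ℝ u p‖ ^ 2) := by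
  have huc : Continuous u := hu.continuous
  have hDu : Continuous (fderiv ℝ u) := hu.continuous_fderiv one_ne_zero
  set G : (ι → ℝ) × ℝ → ℝ := fun p => u p ^ 2 + ‖fderiv ℝ u p‖ ^ 2
  have hvertical : ∀ x, ENNReal.ofReal (u (x, h x) ^ 2) ≤
      ENNReal.ofReal ((1 + H) / H) * ∫⁻ t in Ioo 0 H, ENNReal.ofReal (G (x, t)) := fun x => by
    have hint : IntegrableOn (fun t => G (x, t)) (Ioo 0 H) :=
      (Continuous.integrableOn_Icc (by fun_prop)).mono_set Ioo_subset_Icc_self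
    rw [← ofReal_integral_eq_lintegral_ofReal hint (.of_forall fun t => by positivity),
      ← ENNReal.ofReal_mul (by positivity)]
    exact ENNReal.ofReal_le_ofReal (sq_le_mul_setIntegral_vertical hu x hH (hh_mem x))
  have hconst : ENNReal.ofReal (((max 1 K : ℝ≥0) : ℝ) ^ Fintype.card ι * ((1 + H) / H)) =
      ((max 1 K : ℝ≥0) : ℝ≥0∞) ^ (Fintype.card ι : ℝ) * ENNReal.ofReal ((1 + H) / H) := by
    rw [ENNReal.ofReal_mul (by positivity), ENNReal.rpow_natCast, ← NNReal.coe_pow,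
      ENNReal.ofReal_coe_nnreal, ENNReal.coe_pow]
  calc ∫⁻ p in (fun x => (x, h x)) '' s, ENNReal.ofReal (u p ^ 2) ∂μH[Fintype.card ι]
      ≤ ((max 1 K : ℝ≥0) : ℝ≥0∞) ^ (Fintype.card ι : ℝ) *
          ∫⁻ x in s, ENNReal.ofReal (u (x, h x) ^ 2) ∂μH[Fintype.card ι] :=
        (LipschitzWith.id.prodMk hh).setLIntegral_image_le (by positivity) s (by fun_prop)
    _ ≤ ((max 1 K : ℝ≥0) : ℝ≥0∞) ^ (Fintype.card ι : ℝ) * ∫⁻ x in s,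
          ENNReal.ofReal ((1 + H) / H) * ∫⁻ t in Ioo 0 H, ENNReal.ofReal (G (x, t)) := by
        rw [hausdorffMeasure_pi_real]
        gcongr with x
        exact hvertical x
    _ = _ := by
        rw [lintegral_const_mul _ (by fun_prop), hconst, mul_assoc, Measure.volume_eq_prod,
          setLIntegral_prod _ (by fun_prop)]

theorem integral_le_mul_integral_of_lintegral_le {α β : Type*} [MeasurableSpace α]
    [MeasurableSpace β] {μ : Measure α} {ν : Measure β} {f : α → ℝ} {g : β → ℝ} {c : ℝ}
    (hf : 0 ≤ f) (hfm : AEStronglyMeasurable f μ) (hg : 0 ≤ g) (hgi : Integrable g ν)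
    (hc : 0 ≤ c)
    (h : ∫⁻ x, ENNReal.ofReal (f x) ∂μ ≤ ENNReal.ofReal c * ∫⁻ y, ENNReal.ofReal (g y) ∂ν) :
    ∫ x, f x ∂μ ≤ c * ∫ y, g y ∂ν := by
  rw [← ofReal_integral_eq_lintegral_ofReal hgi (.of_forall hg)] at h
  calc ∫ x, f x ∂μ = (∫⁻ x, ENNReal.ofReal (f x) ∂μ).toReal :=
        integral_eq_lintegral_of_nonneg_ae (.of_forall hf) hfm
    _ ≤ (ENNReal.ofReal c * ENNReal.ofReal (∫ y, g y ∂ν)).toReal :=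
        ENNReal.toReal_mono (by finiteness) h
    _ = c * ∫ y, g y ∂ν := by
        rw [ENNReal.toReal_mul, ENNReal.toReal_ofReal hc,
          ENNReal.toReal_ofReal (integral_nonneg hg)]

theorem stmt6_general (d' : ℕ) (Hh : ℝ) (hH : 0 < Hh) (L : ℝ≥0)
    (Ωt : Set (Fin d' → ℝ)) (hΩtb : Bornology.IsBounded Ωt) :
    ∃ C > (0 : ℝ), ∀ γ : (Fin d' → ℝ) → ℝ, LipschitzWith L γ →
      (∀ x, γ x ∈ Set.Icc (0 : ℝ) 1) →
      (∀ (x : Fin d' → ℝ) (k : Fin d' → ℤ), γ (x + fun i => (k i : ℝ)) = γ x) →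
      ∀ ε ∈ Set.Ioo (0 : ℝ) Hh, ∀ u : (Fin d' → ℝ) × ℝ → ℝ, ContDiff ℝ 1 u →
      Real.sqrt (∫ p in (fun x : Fin d' → ℝ => (x, ε * γ (ε⁻¹ • x))) '' Ωt,
          (u p) ^ 2 ∂μH[(d' : ℝ)]) ≤
        C * Real.sqrt (∫ p in Ωt ×ˢ Set.Ioo (0 : ℝ) Hh,
          ((u p) ^ 2 + ‖fderiv ℝ u p‖ ^ 2)) := by
  refine ⟨√(((max 1 L : ℝ≥0) : ℝ) ^ d' * ((1 + Hh) / Hh)), by positivity, ?_⟩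
  intro γ hγ hγ01 _ ε ⟨hε0, hεH⟩ u hu
  have hmem : ∀ x, ε * γ (ε⁻¹ • x) ∈ Icc 0 Hh := fun x =>
    ⟨mul_nonneg hε0.le (hγ01 _).1, (mul_le_of_le_one_right hε0.le (hγ01 _).2).trans hεH.le⟩
  have htrace := lintegral_sq_graph_le hH (hγ.rescale hε0.ne') hmem Ωt hu
  rw [Fintype.card_fin] at htrace
  have hint : IntegrableOn (fun p => u p ^ 2 + ‖fderiv ℝ u p‖ ^ 2) (Ωt ×ˢ Ioo 0 Hh) :=
    ((hu.continuous.pow 2).add ((hu.continuous_fderiv one_ne_zero).norm.pow 2)).continuousOn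
      |>.integrableOn_compact (hΩtb.prod (Metric.isBounded_Ioo 0 Hh)).isCompact_closure
      |>.mono_set subset_closure
  rw [← Real.sqrt_mul (by positivity)]
  exact Real.sqrt_le_sqrt <| integral_le_mul_integral_of_lintegral_le (fun _ => sq_nonneg _)
    (hu.continuous.pow 2).aestronglyMeasurable (fun _ => by positivity) hint (by positivity) htrace

/-- ε-independent trace estimate on the oscillating graph surface (Lemma 2.3 for a
single height function): for the cylinder `Ω^f = Ω̃ × (0,H)` with `Ω̃` bounded, there is
`C > 0`, independent of `ε`, such that for every `L`-Lipschitz periodic height function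
`γ` with values in `[0,1]`, every `ε ∈ (0,H)` and every (`C¹` representative of an)
`H¹` function `u`, the trace on `Σ_ε = {(x̃, εγ(x̃/ε)) : x̃ ∈ Ω̃}` satisfies
`‖u‖_{L²(Σ_ε)} ≤ C ‖u‖_{H¹(Ω^f)}`. -/
theorem stmt6 (d' : ℕ) (Hh : ℝ) (hH : 0 < Hh) (L : ℝ≥0)
    (Ωt : Set (Fin d' → ℝ)) (hΩt : MeasurableSet Ωt)
    (hΩtb : Bornology.IsBounded Ωt) :
    ∃ C > (0 : ℝ), ∀ γ : (Fin d' → ℝ) → ℝ, LipschitzWith L γ →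
      (∀ x, γ x ∈ Set.Icc (0 : ℝ) 1) →
      (∀ (x : Fin d' → ℝ) (k : Fin d' → ℤ), γ (x + fun i => (k i : ℝ)) = γ x) →
      ∀ ε ∈ Set.Ioo (0 : ℝ) Hh, ∀ u : (Fin d' → ℝ) × ℝ → ℝ, ContDiff ℝ 1 u →
      Real.sqrt (∫ p in (fun x : Fin d' → ℝ => (x, ε * γ (ε⁻¹ • x))) '' Ωt,
          (u p) ^ 2 ∂μH[(d' : ℝ)]) ≤
        C * Real.sqrt (∫ p in Ωt ×ˢ Set.Ioo (0 : ℝ) Hh,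
          ((u p) ^ 2 + ‖fderiv ℝ u p‖ ^ 2)) :=
  stmt6_general d' Hh hH L Ωt hΩtb
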